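/- arXiv:math/9509228 — 2 statements merged into one kernel-verified Lean document; each statement's English description precedes it below -/
import Mathlib

section
/- Every partial order P has a subset P* that is both dominating in P and well-founded (with respect to the strict order of P restricted to P*). -/
open Cardinal

/-- `D` is dominating in `P`: every element of `P` lies below some member of `D`. -/
def IsDomSet {P : Type*} [PartialOrder P] (D : Set P) : Prop :=
  ∀ p : P, ∃ q ∈ D, p ≤ q

theorem exists_wellFounded_dominating (P : Type*) [PartialOrder P] :
    ∃ S : Set P, IsDomSet S ∧ S.WellFoundedOn (· < ·) := by
  classical
  let r : P → P → Prop := WellOrderingRel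
  have hwf : WellFounded r := (IsWellOrder.toIsWellFounded (r := r)).wf
  refine ⟨{p | ∀ y, r y p → ¬ p ≤ y}, ?_, ?_⟩
  · intro p
    obtain ⟨q, hq, hmin⟩ := hwf.has_min {x | p ≤ x} ⟨p, le_refl p⟩
    exact ⟨q, fun y hy hqy => hmin y (le_trans hq hqy) hy, hq⟩
  · refine Subrelation.wf (r := fun a b : {p : P | ∀ y, r y p → ¬ p ≤ y} => r a.1 b.1) ?_ (InvImage.wf Subtype.val hwf)
    intro a b hab
    have hna : ¬ r b.1 a.1 := fun h => a.2 b.1 h (le_of_lt hab)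
    rcases trichotomous_of r a.1 b.1 with h | h | h
    · exact h
    · exact absurd (Subtype.ext h) (ne_of_lt hab)
    · exact absurd h hna
end

section
/- Let λ be an uncountable regular cardinal. Then d(λ) ≤ d_cl(λ)^ℵ₀: if D is a family of functions λ → λ dominating with respect to the club-filter ordering <_cl, then there is a family of size at most |D|^ℵ₀ that is dominating with respect to <*. In particular, given increasing f_n ∈ λ^λ and clubs C_n ⊆ C_{n-1} witnessing domination as in the construction, every g₀ is eventually bounded by the pointwise supremum of countably many members of the closure of D under countable pointwise suprema. -/
open Cardinal

/-- Eventual domination: `f <* g` iff `f β < g β` for all sufficiently large `β`. -/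
def almostLt {T : Type*} [LinearOrder T] (f g : T → T) : Prop :=
  ∃ γ : T, ∀ β : T, γ < β → f β < g β

/-- `C` is a club: unbounded, and closed under limits (every limit point belongs to `C`). -/
def IsClubIn {T : Type*} [LinearOrder T] (C : Set T) : Prop :=
  (∀ x : T, ∃ y ∈ C, x < y) ∧
  ∀ x : T, (∃ y : T, y < x) → (∀ y : T, y < x → ∃ z ∈ C, y < z ∧ z < x) → x ∈ C

/-- Club domination: `f <_cl g` iff `f < g` pointwise on some club. -/
def clubLt {T : Type*} [LinearOrder T] (f g : T → T) : Prop :=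
  ∃ C : Set T, IsClubIn C ∧ ∀ α ∈ C, f α < g α

/-- The bounding number of `(T → T, r)`: the least size of a family with no single
`r`-upper bound. -/
noncomputable def bFun (T : Type*) [LinearOrder T] (r : (T → T) → (T → T) → Prop) : Cardinal :=
  sInf {c : Cardinal | ∃ U : Set (T → T), (∀ g : T → T, ∃ f ∈ U, ¬ r f g) ∧ #U = c}

/-- The dominating number of `(T → T, r)`: the least size of an `r`-dominating family. -/
noncomputable def dFun (T : Type*) [LinearOrder T] (r : (T → T) → (T → T) → Prop) : Cardinal :=
  sInf {c : Cardinal | ∃ D : Set (T → T), (∀ f : T → T, ∃ g ∈ D, r f g) ∧ #D = c}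

/-
Given a `<_cl`-dominating family `D` and `g`, build `g = G 0 ≤ G 1 ≤ ⋯` and decreasing clubs
`C n` such that some `F n ∈ D` dominates `G n` on `C n`, and `G (n + 1) β` bounds `G n` on the
whole interval up to the next point of `C n` above `β`. Every `α` beyond the least point of
`C = ⋂ n, C n` lies in `[β, nextIn (C n) β)` for `β = sup (C ∩ [0, α])` and some `n`: otherwise
the points `nextIn (C n) β` would increase to a point of `C` in `(β, α]`. Hence
`g α ≤ G (n + 1) β < F (n + 1) β`, so `g` is eventually dominated by
`α ↦ sup_n sup_{β ≤ α} F n β`, and there are at most `|D| ^ ℵ₀` such functions.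
-/

open Order Set

theorem IsClubIn.isClub {T : Type*} [LinearOrder T] {C : Set T} (hC : IsClubIn C) :
    IsClub C := by
  refine ⟨dirSupClosed_iff_of_linearOrder.2 fun d hdC ⟨z, hz⟩ a ha => ?_,
    fun x => (hC.1 x).imp fun y hy => ⟨hy.1, hy.2.le⟩⟩
  by_cases had : a ∈ d
  · exact hdC had
  have hlt : ∀ w ∈ d, w < a := fun w hw => (ha.1 hw).lt_of_ne (ne_of_mem_of_not_mem hw had)
  refine hC.2 a ⟨z, hlt z hz⟩ fun y hy => ?_
  obtain ⟨w, hwd, hyw⟩ := (lt_isLUB_iff ha).1 hy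
  exact ⟨w, hdC hwd, hyw, hlt w hwd⟩

theorem isClubIn_univ {T : Type*} [LinearOrder T] [NoMaxOrder T] : IsClubIn (univ : Set T) :=
  ⟨fun x => (exists_gt x).imp fun _ h => ⟨trivial, h⟩, fun _ _ _ => trivial⟩

theorem bddAbove_of_mk_lt_cof {T : Type*} [LinearOrder T] {S : Set T} (hS : #S < cof T) :
    BddAbove S :=
  .of_not_isCofinal fun h => (cof_le h).not_gt hS

theorem mk_Iic_lt_cof {T : Type*} [LinearOrder T] [WellFoundedLT T] [IsRegularCardinalOrder T]
    [NoMaxOrder T] (x : T) : #(Iic x) < cof T := by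
  obtain ⟨y, hxy⟩ := exists_gt x
  rw [cof_eq_cardinalMk]
  exact (mk_le_mk_of_subset fun _ h => lt_of_le_of_lt h hxy).trans_lt (mk_Iio_lt y ord_cardinalMk)

theorem dFun_le_dFun_pow_aleph0 {T : Type*} [LinearOrder T] {r s : (T → T) → (T → T) → Prop}
    (Φ : (ℕ → T → T) → T → T) (hs : ∃ D : Set (T → T), ∀ f, ∃ g ∈ D, s f g)
    (hΦ : ∀ D : Set (T → T), (∀ f, ∃ g ∈ D, s f g) →
      ∀ f, ∃ F : ℕ → T → T, (∀ n, F n ∈ D) ∧ r f (Φ F)) :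
    dFun T r ≤ dFun T s ^ ℵ₀ := by
  obtain ⟨D, hD, hcard⟩ : ∃ D : Set (T → T), (∀ f, ∃ g ∈ D, s f g) ∧ #D = dFun T s :=
    csInf_mem (hs.elim fun D hD =>
      ⟨_, D, hD, rfl⟩ : {c | ∃ D : Set (T → T), (∀ f, ∃ g ∈ D, s f g) ∧ #D = c}.Nonempty)
  have hdom : ∀ f, ∃ h ∈ range fun F : ℕ → D => Φ fun n => F n, r f h := fun f => by
    obtain ⟨F, hF, hr⟩ := hΦ D hD f
    exact ⟨_, ⟨fun n => ⟨F n, hF n⟩, rfl⟩, hr⟩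
  calc dFun T r ≤ #(range fun F : ℕ → D => Φ fun n => F n) := csInf_le' ⟨_, hdom, rfl⟩
    _ ≤ #(ℕ → D) := mk_range_le
    _ = dFun T s ^ ℵ₀ := by rw [mk_arrow, hcard]; simp

section ConditionallyCompleteLinearOrder

variable {T : Type*} [ConditionallyCompleteLinearOrder T]

noncomputable def nextIn (C : Set T) (x : T) : T := sInf (C ∩ Ioi x)

noncomputable def runningSup (f : T → T) (x : T) : T := sSup (f '' Iic x)

noncomputable def clubApprox (club : (T → T) → Set T) (g : T → T) : ℕ → (T → T) × Set T
  | 0 => (g, club g)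
  | n + 1 =>
    let G := runningSup (clubApprox club g n).1 ∘ nextIn (clubApprox club g n).2
    (G, (clubApprox club g n).2 ∩ club G)

theorem clubApprox.snd_subset (club : (T → T) → Set T) (g : T → T) (n : ℕ) :
    (clubApprox club g n).2 ⊆ club (clubApprox club g n).1 := by
  cases n with
  | zero => exact subset_rfl
  | succ n => exact inter_subset_right

theorem clubApprox.antitone_snd (club : (T → T) → Set T) (g : T → T) :
    Antitone fun n => (clubApprox club g n).2 :=
  antitone_nat_of_succ_le fun _ => inter_subset_left

variable [WellFoundedLT T]

theorem clubApprox.isClub_snd {club : (T → T) → Set T} (g : T → T) (hcof : cof T ≠ ℵ₀)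
    (hclub : ∀ f, IsClub (club f)) (n : ℕ) : IsClub (clubApprox club g n).2 := by
  induction n with
  | zero => exact hclub g
  | succ n ih => exact ih.inter hcof (hclub _)

variable [NoMaxOrder T]

theorem nextIn_mem {C : Set T} (hC : IsCofinal C) (x : T) : nextIn C x ∈ C ∩ Ioi x := by
  obtain ⟨y, hxy⟩ := exists_gt x
  obtain ⟨z, hz, hyz⟩ := hC y
  exact csInf_mem ⟨z, hz, hxy.trans_le hyz⟩

theorem nextIn_le_nextIn {C C' : Set T} (hC' : IsCofinal C') (h : C' ⊆ C) (x : T) :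
    nextIn C x ≤ nextIn C' x :=
  csInf_le_csInf ⟨x, fun _ hy => hy.2.le⟩ ⟨_, nextIn_mem hC' x⟩ (inter_subset_inter_left _ h)

theorem exists_mem_iInter_le_lt_nextIn (hcof : ℵ₀ < cof T) {C : ℕ → Set T}
    (hC : ∀ n, IsClub (C n)) (hanti : Antitone C) {γ α : T} (hγ : γ ∈ ⋂ n, C n) (hγα : γ ≤ α) :
    ∃ β ∈ ⋂ n, C n, β ≤ α ∧ ∃ n, α < nextIn (C n) β := by
  have hbdd : BddAbove ((⋂ n, C n) ∩ Iic α) := ⟨α, fun _ h => h.2⟩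
  set β := sSup ((⋂ n, C n) ∩ Iic α)
  have hβ : β ∈ ⋂ n, C n :=
    (IsClub.iInter_of_countable hcof.ne' hC).csSup_mem inter_subset_left ⟨γ, hγ, hγα⟩ hbdd
  refine ⟨β, hβ, csSup_le ⟨γ, hγ, hγα⟩ fun _ h => h.2, ?_⟩
  by_contra! hle
  set τ := fun n => nextIn (C n) β
  have hτ : ∀ n, τ n ∈ C n ∩ Ioi β := fun n => nextIn_mem (hC n).isCofinal β
  have hτmono : Monotone τ := fun m n h => nextIn_le_nextIn (hC n).isCofinal (hanti h) β
  have hτbdd : BddAbove (range τ) := ⟨α, forall_mem_range.2 hle⟩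
  -- each tail of `τ` lies in one of the clubs and has the same supremum
  have hsup : ⨆ n, τ n ∈ ⋂ n, C n := mem_iInter.2 fun m => by
    rw [← hτmono.ciSup_comp_tendsto_atTop_of_linearOrder (Filter.tendsto_add_atTop_nat m)]
    exact (hC m).csSup_mem (range_subset_iff.2 fun n => hanti (Nat.le_add_left m n) (hτ _).1)
      (range_nonempty _) (hτbdd.mono (range_comp_subset_range _ τ))
  have : ⨆ n, τ n ≤ β := le_csSup hbdd ⟨hsup, ciSup_le hle⟩
  exact (hτ 0).2.not_ge ((le_ciSup hτbdd 0).trans this)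

variable [IsRegularCardinalOrder T]

theorem le_runningSup (f : T → T) {x y : T} (h : y ≤ x) : f y ≤ runningSup f x :=
  le_csSup (bddAbove_of_mk_lt_cof (mk_image_le.trans_lt (mk_Iic_lt_cof x))) ⟨y, h, rfl⟩

theorem le_iSup_runningSup (hcof : ℵ₀ < cof T) (F : ℕ → T → T) (n : ℕ) {x y : T} (h : y ≤ x) :
    F n y ≤ ⨆ m, runningSup (F m) x :=
  (le_runningSup (F n) h).trans <| le_ciSup (f := fun m => runningSup (F m) x)
    (bddAbove_of_mk_lt_cof ((countable_range _).le_aleph0.trans_lt hcof)) n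

theorem clubApprox.le_fst {club : (T → T) → Set T} (g : T → T) (hcof : cof T ≠ ℵ₀)
    (hclub : ∀ f, IsClub (club f)) (n : ℕ) (α : T) : g α ≤ (clubApprox club g n).1 α := by
  induction n with
  | zero => exact le_rfl
  | succ n ih =>
    exact ih.trans <| le_runningSup _ (nextIn_mem (isClub_snd g hcof hclub n).isCofinal α).2.le

theorem exists_almostLt_iSup_runningSup (hcof : ℵ₀ < cof T) {D : Set (T → T)}
    (hD : ∀ f, ∃ g ∈ D, clubLt f g) (g : T → T) :
    ∃ F : ℕ → T → T, (∀ n, F n ∈ D) ∧ almostLt g fun α => ⨆ n, runningSup (F n) α := by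
  choose dom hdom club hclub hlt using hD
  replace hclub : ∀ f, IsClub (club f) := fun f => (hclub f).isClub
  set G := fun n => (clubApprox club g n).1
  have hC := clubApprox.isClub_snd g hcof.ne' hclub
  have : Nonempty T := cof_ne_zero_iff.1 (aleph0_pos.trans hcof).ne'
  obtain ⟨γ, hγ⟩ := (IsClub.iInter_of_countable hcof.ne' hC).nonempty
  refine ⟨fun n => dom (G n), fun n => hdom _, γ, fun α hγα => ?_⟩
  obtain ⟨β, hβ, hβα, n, hαβ⟩ := exists_mem_iInter_le_lt_nextIn hcof hC
    (clubApprox.antitone_snd club g) hγ hγα.le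
  calc g α ≤ G n α := clubApprox.le_fst g hcof.ne' hclub n α
    _ ≤ G (n + 1) β := le_runningSup _ hαβ.le
    _ < dom (G (n + 1)) β :=
      hlt _ β (clubApprox.snd_subset club g (n + 1) (mem_iInter.1 hβ (n + 1)))
    _ ≤ ⨆ m, runningSup (dom (G m)) α := le_iSup_runningSup hcof (fun m => dom (G m)) (n + 1) hβα

end ConditionallyCompleteLinearOrder

theorem dFun_le_dFun_club_pow_aleph0 (κ : Cardinal) (hκ : κ.IsRegular) (huncount : ℵ₀ < κ) :
    dFun κ.ord.ToType almostLt ≤ dFun κ.ord.ToType clubLt ^ ℵ₀ := by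
  have hcof : cof κ.ord.ToType = κ := by rw [Ordinal.cof_toType, hκ.cof_ord]
  have : NoMaxOrder κ.ord.ToType := Cardinal.noMaxOrder huncount.le
  have : Nonempty κ.ord.ToType :=
    cof_ne_zero_iff.1 (by rw [hcof]; exact (aleph0_pos.trans huncount).ne')
  let := WellFoundedLT.toOrderBot κ.ord.ToType
  let := WellFoundedLT.conditionallyCompleteLinearOrderBot κ.ord.ToType
  have : IsRegularCardinalOrder κ.ord.ToType := ⟨by rw [Ordinal.type_toType, hcof]⟩
  exact dFun_le_dFun_pow_aleph0 (fun F α => ⨆ n, runningSup (F n) α)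
    ⟨univ, fun f => ⟨succ ∘ f, trivial, univ, isClubIn_univ, fun α _ => lt_succ (f α)⟩⟩
    fun _ hD => exists_almostLt_iSup_runningSup (by rwa [hcof]) hD
end
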